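/- arXiv:2005.09669 — 3 statements merged into one kernel-verified Lean document; each statement's English description precedes it below -/
import Mathlib

section
/- Let $X$ be a real-valued square-integrable random variable with $X \ge 0$. Then $\operatorname{Var}(X) \le (\operatorname{Var}(X^{3/2}))^{2/3}$. -/
/-!
Put `Y = X^{3/2}`, so that `X = Y^{2/3}`. The variance of `X` is at most its mean square
deviation from the constant `(𝔼 Y)^{2/3}`; since `t ↦ t^{2/3}` is `2/3`-Hölder with constant `1`
on `[0, ∞)`, this is at most `𝔼 |Y - 𝔼 Y|^{4/3}`, and by Jensen's inequality for the concave
map `t ↦ t^{2/3}` that is at most `(𝔼 |Y - 𝔼 Y|^2)^{2/3} = Var(Y)^{2/3}`.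
-/

open MeasureTheory ProbabilityTheory

namespace Real

theorem abs_rpow_sub_rpow_le {a b p : ℝ} (ha : 0 ≤ a) (hb : 0 ≤ b) (hp0 : 0 ≤ p) (hp1 : p ≤ 1) :
    |a ^ p - b ^ p| ≤ |a - b| ^ p := by
  wlog hba : b ≤ a generalizing a b
  · rw [abs_sub_comm, abs_sub_comm a]
    exact this hb ha (le_of_not_ge hba)
  have hpow : b ^ p ≤ a ^ p := rpow_le_rpow hb hba hp0
  rw [abs_of_nonneg (sub_nonneg.2 hpow), abs_of_nonneg (sub_nonneg.2 hba), sub_le_iff_le_add]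
  calc a ^ p = (a - b + b) ^ p := by rw [sub_add_cancel]
    _ ≤ (a - b) ^ p + b ^ p := rpow_add_le_add_rpow (sub_nonneg.2 hba) hb hp0 hp1

theorem enorm_rpow_sub_rpow_le {a b p : ℝ} (ha : 0 ≤ a) (hb : 0 ≤ b) (hp0 : 0 ≤ p)
    (hp1 : p ≤ 1) : ‖a ^ p - b ^ p‖ₑ ≤ ‖a - b‖ₑ ^ p := by
  rw [enorm_eq_ofReal_abs, enorm_eq_ofReal_abs, ENNReal.ofReal_rpow_of_nonneg (abs_nonneg _) hp0]
  exact ENNReal.ofReal_le_ofReal (abs_rpow_sub_rpow_le ha hb hp0 hp1)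

end Real

section

variable {α E : Type*} {mα : MeasurableSpace α} {μ : Measure α} [NormedAddCommGroup E]

theorem lintegral_enorm_rpow_mul_le_rpow [IsProbabilityMeasure μ] {f : α → E}
    (hf : AEStronglyMeasurable f μ) {p q : ℝ} (hp0 : 0 < p) (hp1 : p ≤ 1) (hq : 0 < q) :
    ∫⁻ a, ‖f a‖ₑ ^ (q * p) ∂μ ≤ (∫⁻ a, ‖f a‖ₑ ^ q ∂μ) ^ p := by
  rw [lintegral_rpow_enorm_eq_rpow_eLpNorm' (mul_pos hq hp0),
    lintegral_rpow_enorm_eq_rpow_eLpNorm' hq, ← ENNReal.rpow_mul]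
  gcongr
  exact eLpNorm'_le_eLpNorm'_of_exponent_le (mul_pos hq hp0)
    (mul_le_of_le_one_right hq.le hp1) μ hf

end

namespace ProbabilityTheory

variable {Ω : Type*} {mΩ : MeasurableSpace Ω} {μ : Measure Ω} [IsProbabilityMeasure μ]

theorem evariance_le_lintegral_enorm_sub_sq {X : Ω → ℝ} (hX : MemLp X 2 μ) (c : ℝ) :
    evariance X μ ≤ ∫⁻ ω, ‖X ω - c‖ₑ ^ 2 ∂μ := by
  have hXc : MemLp (fun ω => X ω - c) 2 μ := hX.sub (memLp_const c)
  calc evariance X μ = evariance (fun ω => X ω - c) μ := by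
        rw [← hX.ofReal_variance_eq, ← hXc.ofReal_variance_eq, variance_sub_const hX.1]
    _ ≤ ∫⁻ ω, ‖X ω - c‖ₑ ^ 2 ∂μ :=
        (evariance_def' (hX.1.sub aestronglyMeasurable_const)).trans_le tsub_le_self

theorem evariance_rpow_le {f : Ω → ℝ} (hf : AEStronglyMeasurable f μ) (hf0 : 0 ≤ᵐ[μ] f)
    {p : ℝ} (hp0 : 0 < p) (hp1 : p ≤ 1) (hfp : MemLp (fun ω => f ω ^ p) 2 μ) :
    evariance (fun ω => f ω ^ p) μ ≤ evariance f μ ^ p := by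
  have hmean : 0 ≤ μ[f] := integral_nonneg_of_ae hf0
  calc evariance (fun ω => f ω ^ p) μ ≤ ∫⁻ ω, ‖f ω ^ p - μ[f] ^ p‖ₑ ^ 2 ∂μ :=
        evariance_le_lintegral_enorm_sub_sq hfp _
    _ ≤ ∫⁻ ω, ‖f ω - μ[f]‖ₑ ^ (2 * p) ∂μ := by
        refine lintegral_mono_ae (hf0.mono fun ω hω => ?_)
        rw [mul_comm, ENNReal.rpow_mul, ENNReal.rpow_two]
        gcongr
        exact Real.enorm_rpow_sub_rpow_le hω hmean hp0.le hp1
    _ ≤ (∫⁻ ω, ‖f ω - μ[f]‖ₑ ^ (2 : ℝ) ∂μ) ^ p :=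
        lintegral_enorm_rpow_mul_le_rpow (hf.sub aestronglyMeasurable_const) hp0 hp1 two_pos
    _ = evariance f μ ^ p := by simp only [ENNReal.rpow_two, evariance]

end ProbabilityTheory

/-- for a nonnegative square-integrable random variable `X`,
`Var(X) ≤ (Var(X^{3/2}))^{2/3}` (stated with `evariance` in `ℝ≥0∞` so that an infinite
right-hand side is handled gracefully). -/
theorem stmt_7 {Ω : Type*} [MeasureSpace Ω] (P : Measure Ω) [IsProbabilityMeasure P]
    (X : Ω → ℝ) (hX : MemLp X 2 P) (hX0 : ∀ ω, 0 ≤ X ω) :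
    evariance X P ≤ (evariance (fun ω => X ω ^ ((3 : ℝ) / 2)) P) ^ ((2 : ℝ) / 3) := by
  have hX_eq : X = fun ω => (X ω ^ ((3 : ℝ) / 2)) ^ ((2 : ℝ) / 3) := by
    funext ω
    rw [← Real.rpow_mul (hX0 ω)]
    norm_num
  have hY : AEStronglyMeasurable (fun ω => X ω ^ ((3 : ℝ) / 2)) P :=
    (Real.continuous_rpow_const (by norm_num)).comp_aestronglyMeasurable hX.1
  calc evariance X P = evariance (fun ω => (X ω ^ ((3 : ℝ) / 2)) ^ ((2 : ℝ) / 3)) P :=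
        congrArg (evariance · P) hX_eq
    _ ≤ _ := evariance_rpow_le hY (ae_of_all _ fun ω => Real.rpow_nonneg (hX0 ω) _)
        (by norm_num) (by norm_num) (hX_eq ▸ hX)
end

section
/- Let $f : \mathbb{R}^d \to \mathbb{R}$ be differentiable with minimizer $x^*$, let $\phi$ be a twice continuously differentiable function with $\nabla^2\phi(x)$ positive definite for all $x$, and suppose the mirror PL inequality holds: $f(x) - f(x^*) \le \frac{C}{2}\langle \nabla f(x), [\nabla^2\phi(x)]^{-1}\nabla f(x)\rangle$ for all $x$. If $(x_t)_{t\ge 0}$ solves the mirror flow $\dot x_t = -[\nabla^2\phi(x_t)]^{-1}\nabla f(x_t)$, then $f(x_t) - f(x^*) \le (f(x_0) - f(x^*)) e^{-2t/C}$. -/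
open Matrix

/-- The Hessian matrix of `φ : ℝᵈ → ℝ` at `x`, with entries the second partial derivatives. -/
noncomputable def hessian {d : ℕ} (φ : EuclideanSpace ℝ (Fin d) → ℝ)
    (x : EuclideanSpace ℝ (Fin d)) : Matrix (Fin d) (Fin d) ℝ :=
  Matrix.of fun i j =>
    iteratedFDeriv ℝ 2 φ x ![EuclideanSpace.single i (1 : ℝ), EuclideanSpace.single j (1 : ℝ)]

/-- View a Euclidean vector as a plain vector `Fin d → ℝ`. -/
def ofE {d : ℕ} (v : EuclideanSpace ℝ (Fin d)) : Fin d → ℝ := v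

/-- View a plain vector `Fin d → ℝ` as a Euclidean vector. -/
def toE {d : ℕ} (v : Fin d → ℝ) : EuclideanSpace ℝ (Fin d) := WithLp.toLp 2 v

/-! The objective gap `f (x t) - f xstar` decreases at rate `⟨∇f, [∇²φ]⁻¹ ∇f⟩` along the mirror
flow, and the mirror PL inequality bounds this rate from below by `2 / C` times the gap itself;
Grönwall's inequality turns the differential inequality `g' ≤ -(2 / C) g` into exponential decay. -/

theorem le_mul_exp_of_hasDerivAt_le_mul {g g' : ℝ → ℝ} {K : ℝ}
    (hg : ∀ t, 0 ≤ t → HasDerivAt g (g' t) t) (hbound : ∀ t, 0 ≤ t → g' t ≤ K * g t)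
    (T : ℝ) (hT : 0 ≤ T) : g T ≤ g 0 * Real.exp (K * T) := by
  have h := le_gronwallBound_of_liminf_deriv_right_le (f := g) (f' := g') (ε := 0) (b := T)
    (fun t ht => (hg t ht.1).continuousAt.continuousWithinAt)
    (fun t ht _ hr => (hg t ht.1).hasDerivWithinAt.liminf_right_slope_le hr)
    le_rfl (fun t ht => by simpa using hbound t ht.1) T ⟨hT, le_rfl⟩
  rwa [sub_zero, gronwallBound_ε0] at h

theorem hasDerivAt_comp_of_hasDerivAt_toE {d : ℕ} {f : EuclideanSpace ℝ (Fin d) → ℝ}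
    {x : ℝ → EuclideanSpace ℝ (Fin d)} {v : Fin d → ℝ} {t : ℝ}
    (hf : DifferentiableAt ℝ f (x t)) (hx : HasDerivAt x (toE v) t) :
    HasDerivAt (fun s => f (x s)) (ofE (gradient f (x t)) ⬝ᵥ v) t := by
  refine (hf.hasGradientAt.hasFDerivAt.comp_hasDerivAt t hx).congr_deriv ?_
  simp only [InnerProductSpace.toDual_apply_apply, PiLp.inner_apply, RCLike.inner_apply,
    starRingEnd_apply, star_trivial, toE, ofE, dotProduct, mul_comm]

theorem stmt_17_general {d : ℕ} (f : EuclideanSpace ℝ (Fin d) → ℝ) (hf : Differentiable ℝ f)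
    (xstar : EuclideanSpace ℝ (Fin d))
    (φ : EuclideanSpace ℝ (Fin d) → ℝ)
    (C : ℝ) (hC : 0 < C)
    (hMPL : ∀ x, f x - f xstar
      ≤ C / 2 * (ofE (gradient f x) ⬝ᵥ (hessian φ x)⁻¹.mulVec (ofE (gradient f x))))
    (x : ℝ → EuclideanSpace ℝ (Fin d))
    (hflow : ∀ t : ℝ, 0 ≤ t →
      HasDerivAt x (toE (-(hessian φ (x t))⁻¹.mulVec (ofE (gradient f (x t))))) t) :
    ∀ t : ℝ, 0 ≤ t →
      f (x t) - f xstar ≤ (f (x 0) - f xstar) * Real.exp (-2 * t / C) := by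
  intro T hT
  set Q : ℝ → ℝ := fun t =>
    ofE (gradient f (x t)) ⬝ᵥ (hessian φ (x t))⁻¹.mulVec (ofE (gradient f (x t)))
  have hgap : ∀ t, 0 ≤ t → HasDerivAt (fun s => f (x s) - f xstar) (-Q t) t := fun t ht => by
    simpa only [dotProduct_neg] using
      ((hasDerivAt_comp_of_hasDerivAt_toE (hf (x t)) (hflow t ht)).sub_const (f xstar))
  have hdecay : ∀ t, 0 ≤ t → -Q t ≤ -2 / C * (f (x t) - f xstar) := fun t _ => by
    rw [div_mul_eq_mul_div, le_div_iff₀ hC]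
    linarith [hMPL (x t)]
  have h := le_mul_exp_of_hasDerivAt_le_mul hgap hdecay T hT
  rwa [div_mul_eq_mul_div] at h

/-- exponential decay of the objective along the mirror flow under a mirror
Polyak-Łojasiewicz inequality. -/
theorem stmt_17 {d : ℕ} (f : EuclideanSpace ℝ (Fin d) → ℝ) (hf : Differentiable ℝ f)
    (xstar : EuclideanSpace ℝ (Fin d)) (hmin : ∀ x, f xstar ≤ f x)
    (φ : EuclideanSpace ℝ (Fin d) → ℝ) (hφ : ContDiff ℝ 2 φ)
    (hφpd : ∀ x, (hessian φ x).PosDef)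
    (C : ℝ) (hC : 0 < C)
    (hMPL : ∀ x, f x - f xstar
      ≤ C / 2 * (ofE (gradient f x) ⬝ᵥ (hessian φ x)⁻¹.mulVec (ofE (gradient f x))))
    (x : ℝ → EuclideanSpace ℝ (Fin d))
    (hflow : ∀ t : ℝ, 0 ≤ t →
      HasDerivAt x (toE (-(hessian φ (x t))⁻¹.mulVec (ofE (gradient f (x t))))) t) :
    ∀ t : ℝ, 0 ≤ t →
      f (x t) - f xstar ≤ (f (x 0) - f xstar) * Real.exp (-2 * t / C) :=
  stmt_17_general f hf xstar φ C hC hMPL x hflow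
end

section
/- Let $q \in (1,\infty)$, $p$ its Hölder conjugate ($1/p + 1/q = 1$), and let $h : [0,\infty) \to (0,\infty)$ be differentiable, nonincreasing, with $h(t) \to 0$ as $t \to \infty$. Let $w : [0,\infty) \to [0,\infty)$ be differentiable with $w(0)=0$, and let $C > 0$. Suppose for all $t$: $w'(t) \le 2 E(t)$ and $h'(t) = -4 F(t)$ where $E(t)^2 \le F(t)$ (Cauchy–Schwarz/Jensen) and $h(t)^{2/q} \le 4C\,F(t)$ (Łojasiewicz hypothesis). Then $\lim_{t\to\infty} w(t) \le p\sqrt{C}\, h(0)^{1/p}$, provided the limit exists. -/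
/-- the abstract ODE comparison argument behind the chi-squared
transportation inequality: if `w' ≤ 2E`, `h' = -4F`, `E² ≤ F` and `h^{2/q} ≤ 4CF`, with
`h > 0` nonincreasing tending to `0`, `w(0) = 0`, then `lim_{t→∞} w(t) ≤ p √C h(0)^{1/p}`
(where `1/p + 1/q = 1`), provided the limit exists. -/
theorem stmt_19 (q p C : ℝ) (hq : 1 < q) (hpq : 1 / p + 1 / q = 1) (hC : 0 < C)
    (h w E F h' w' : ℝ → ℝ)
    (hpos : ∀ t : ℝ, 0 ≤ t → 0 < h t)
    (hmono : AntitoneOn h (Set.Ici (0 : ℝ)))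
    (hlim : Filter.Tendsto h Filter.atTop (nhds 0))
    (hderivh : ∀ t : ℝ, 0 ≤ t → HasDerivAt h (h' t) t)
    (hderivw : ∀ t : ℝ, 0 ≤ t → HasDerivAt w (w' t) t)
    (hw0 : w 0 = 0) (hwnn : ∀ t : ℝ, 0 ≤ t → 0 ≤ w t)
    (hwE : ∀ t : ℝ, 0 ≤ t → w' t ≤ 2 * E t)
    (hhF : ∀ t : ℝ, 0 ≤ t → h' t = -4 * F t)
    (hEF : ∀ t : ℝ, 0 ≤ t → E t ^ 2 ≤ F t)
    (hLoj : ∀ t : ℝ, 0 ≤ t → h t ^ ((2 : ℝ) / q) ≤ 4 * C * F t)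
    (L : ℝ) (hwlim : Filter.Tendsto w Filter.atTop (nhds L)) :
    L ≤ p * Real.sqrt C * h 0 ^ ((1 : ℝ) / p) := by
  have hq0 : (0:ℝ) < q := lt_trans one_pos hq
  have hq1 : 1 / q < 1 := by rw [div_lt_one hq0]; exact hq
  have hp1 : (0:ℝ) < 1 / p := by linarith
  have hp0 : (0:ℝ) < p := one_div_pos.mp hp1
  have hpexp : (1:ℝ)/p - 1 = -(1/q) := by linarith
  set g : ℝ → ℝ := fun t => w t + p * Real.sqrt C * h t ^ ((1:ℝ)/p) with hg
  have hderivg : ∀ t : ℝ, 0 ≤ t → HasDerivAt g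
      (w' t + p * Real.sqrt C * (h' t * ((1:ℝ)/p) * h t ^ ((1:ℝ)/p - 1))) t := by
    intro t ht
    exact (hderivw t ht).add
      (((hderivh t ht).rpow_const (Or.inl (hpos t ht).ne')).const_mul (p * Real.sqrt C))
  have hderivle : ∀ t : ℝ, 0 ≤ t →
      w' t + p * Real.sqrt C * (h' t * ((1:ℝ)/p) * h t ^ ((1:ℝ)/p - 1)) ≤ 0 := by
    intro t ht
    set B := h t ^ ((1:ℝ)/q) with hB
    have hBpos : 0 < B := Real.rpow_pos_of_pos (hpos t ht) _
    have hFpos : 0 < F t := by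
      have h1 := hLoj t ht
      have h2 : 0 < h t ^ ((2:ℝ)/q) := Real.rpow_pos_of_pos (hpos t ht) _
      nlinarith
    have hsF : Real.sqrt (F t) * Real.sqrt (F t) = F t := Real.mul_self_sqrt hFpos.le
    have hsC : Real.sqrt C * Real.sqrt C = C := Real.mul_self_sqrt hC.le
    have hB2 : B ^ 2 = h t ^ ((2:ℝ)/q) := by
      rw [hB, ← Real.rpow_natCast (h t ^ ((1:ℝ)/q)) 2, ← Real.rpow_mul (hpos t ht).le]
      congr 1
      push_cast
      ring
    have hBle : B ≤ 2 * Real.sqrt C * Real.sqrt (F t) := by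
      have hsq : B ^ 2 ≤ (2 * Real.sqrt C * Real.sqrt (F t)) ^ 2 := by
        have h1 := hLoj t ht
        have : (2 * Real.sqrt C * Real.sqrt (F t)) ^ 2 = 4 * C * F t := by
          ring_nf; nlinarith [hsF, hsC]
        rw [hB2, this]; exact h1
      calc B = Real.sqrt (B ^ 2) := (Real.sqrt_sq hBpos.le).symm
        _ ≤ Real.sqrt ((2 * Real.sqrt C * Real.sqrt (F t)) ^ 2) := Real.sqrt_le_sqrt hsq
        _ = 2 * Real.sqrt C * Real.sqrt (F t) := Real.sqrt_sq (by positivity)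
    have hE : E t ≤ Real.sqrt (F t) :=
      calc E t ≤ |E t| := le_abs_self _
        _ = Real.sqrt (E t ^ 2) := (Real.sqrt_sq_eq_abs _).symm
        _ ≤ Real.sqrt (F t) := Real.sqrt_le_sqrt (hEF t ht)
    have hA : h t ^ ((1:ℝ)/p - 1) = B⁻¹ := by
      rw [hpexp, Real.rpow_neg (hpos t ht).le, hB]
    have key : 2 * Real.sqrt (F t) ≤ 4 * Real.sqrt C * F t * B⁻¹ := by
      have h1 : B * (2 * Real.sqrt (F t)) ≤ 4 * Real.sqrt C * F t := by
        calc B * (2 * Real.sqrt (F t))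
            ≤ (2 * Real.sqrt C * Real.sqrt (F t)) * (2 * Real.sqrt (F t)) := by
              have : 0 ≤ 2 * Real.sqrt (F t) := by positivity
              exact mul_le_mul_of_nonneg_right hBle this
          _ = 4 * Real.sqrt C * F t := by linear_combination 4 * Real.sqrt C * hsF
      have h2 : 2 * Real.sqrt (F t) ≤ 4 * Real.sqrt C * F t / B :=
        (le_div_iff₀ hBpos).mpr (by linarith)
      rwa [div_eq_mul_inv] at h2
    have hwb : w' t ≤ 4 * Real.sqrt C * F t * B⁻¹ :=
      le_trans (hwE t ht) (le_trans (by linarith) key)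
    have heq : p * Real.sqrt C * (h' t * ((1:ℝ)/p) * h t ^ ((1:ℝ)/p - 1))
        = -(4 * Real.sqrt C * F t * B⁻¹) := by
      rw [hA, hhF t ht]
      field_simp
    rw [heq]; linarith
  have hganti : AntitoneOn g (Set.Ici (0:ℝ)) := by
    apply antitoneOn_of_deriv_nonpos (convex_Ici 0)
    · intro t ht
      exact ((hderivg t ht).continuousAt).continuousWithinAt
    · rw [interior_Ici]
      intro t ht
      exact (hderivg t (le_of_lt ht)).differentiableAt.differentiableWithinAt
    · rw [interior_Ici]
      intro t ht
      rw [(hderivg t ht.le).deriv]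
      exact hderivle t ht.le
  have key : ∀ t : ℝ, 0 ≤ t → w t ≤ p * Real.sqrt C * h 0 ^ ((1:ℝ)/p) := by
    intro t ht
    have h1 : g t ≤ g 0 := hganti Set.self_mem_Ici ht ht
    have h2 : 0 ≤ p * Real.sqrt C * h t ^ ((1:ℝ)/p) :=
      mul_nonneg (mul_nonneg hp0.le (Real.sqrt_nonneg C)) (Real.rpow_nonneg (hpos t ht).le _)
    have h3 : g 0 = p * Real.sqrt C * h 0 ^ ((1:ℝ)/p) := by simp [hg, hw0]
    have h4 : w t ≤ g t := by simp only [hg]; linarith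
    calc w t ≤ g t := h4
      _ ≤ g 0 := h1
      _ = _ := h3
  exact le_of_tendsto hwlim (Filter.eventually_atTop.mpr ⟨0, fun t ht => key t ht⟩)
end
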